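/- arXiv:2411.13233 — 2 statements merged into one kernel-verified Lean document; each statement's English description precedes it below -/
import Mathlib

section
/- For any class [θ]_n ∈ R_B(f^n; x₀, n(ω)), the length l of its [f^ω]-orbit divides its depth d. (More precisely, if [θ]_n is reducible to m, then [f^ω]^m([θ]_n) = [θ]_n, so l divides m; applying this to m = d gives l | d.) -/
open unitInterval

/-- The homotopy lifting property with respect to all spaces (Hurewicz fibration). -/
def IsHurewiczFibration {E B : Type} [TopologicalSpace E] [TopologicalSpace B]
    (p : C(E, B)) : Prop :=
  ∀ (X : Type) [TopologicalSpace X] (H : C(X × I, B)) (h₀ : C(X, E)),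
    (∀ x, H (x, 0) = p (h₀ x)) →
      ∃ H' : C(X × I, E), (∀ x, H' (x, 0) = h₀ x) ∧ ∀ z, p (H' z) = H z

variable {E B : Type} [TopologicalSpace E] [TopologicalSpace B]

/-- Loops at `x₀` lying in the fiber of `p` through `x₀`; they represent elements of
`π₁(Y, x₀)` where `Y = p⁻¹(p x₀)`. -/
def FiberLoop (p : C(E, B)) (x₀ : E) : Type :=
  {θ : Path x₀ x₀ // ∀ t, p (θ t) = p x₀}

/-- Two fiber loops `θ`, `θ'` are Reidemeister related over `B` (for the fiber map `g` and
base path `w` from `x₀` to `g x₀`) if there are a loop `c` in `E` at `x₀` and a lift `H` of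
the homotopy `(t,s) ↦ p (c t)` with `H(t,0) = c(t)`, `H(0,s) = (θ∗w)(s)`, `H(t,1) = g(c(t))`
and `H(1,s) = (θ'∗w)(s)`. -/
def ReidemeisterRelB (p : C(E, B)) (g : C(E, E)) {x₀ : E} (w : Path x₀ (g x₀)) :
    FiberLoop p x₀ → FiberLoop p x₀ → Prop := fun θ θ' =>
  ∃ (c : Path x₀ x₀) (H : C(I × I, E)),
    (∀ t, H (t, 0) = c t) ∧
    (∀ s, H (0, s) = (θ.1.trans w) s) ∧
    (∀ t, H (t, 1) = g (c t)) ∧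
    (∀ s, H (1, s) = (θ'.1.trans w) s) ∧
    (∀ t s, p (H (t, s)) = p (c t))

/-- The set of Reidemeister classes over `B`. -/
def ReidemeisterSetB (p : C(E, B)) (g : C(E, E)) {x₀ : E} (w : Path x₀ (g x₀)) : Type :=
  Quot (ReidemeisterRelB p g w)

/-- The `n`-th iterate of a continuous self-map, as a continuous map. -/
def iterC (f : C(E, E)) (n : ℕ) : C(E, E) := ⟨(⇑f)^[n], f.continuous.iterate n⟩

/-- The path `n(ω) = ω ∗ f(ω) ∗ ⋯ ∗ f^{n−1}(ω)` from `x₀` to `f^n(x₀)`. -/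
noncomputable def nPath (f : C(E, E)) {x₀ : E} (ω : Path x₀ (f x₀)) : (n : ℕ) → Path x₀ ((⇑f)^[n] x₀)
  | 0 => Path.refl x₀
  | 1 => ω
  | (n + 2) => (nPath f ω (n + 1)).trans (ω.map (f.continuous.iterate (n + 1)))

theorem fiber_iterate {p : C(E, B)} {f : C(E, E)} (hf : ∀ x, p (f x) = p x) :
    ∀ (k : ℕ) (x : E), p ((⇑f)^[k] x) = p x
  | 0, _ => rfl
  | (k + 1), x => by
      rw [Function.iterate_succ_apply, fiber_iterate hf k (f x), hf x]

theorem fiber_trans {p : C(E, B)} {x₀ a b c : E} {γ : Path a b} {δ : Path b c}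
    (hγ : ∀ t, p (γ t) = p x₀) (hδ : ∀ t, p (δ t) = p x₀) :
    ∀ t, p ((γ.trans δ) t) = p x₀ := by
  intro t
  rw [Path.trans_apply]
  split_ifs <;> first | exact hγ _ | exact hδ _

theorem fiber_symm {p : C(E, B)} {x₀ a b : E} {γ : Path a b}
    (hγ : ∀ t, p (γ t) = p x₀) : ∀ t, p (γ.symm t) = p x₀ := fun _ => hγ _

theorem fiber_map {p : C(E, B)} {f : C(E, E)} (hf : ∀ x, p (f x) = p x) {x₀ a b : E}
    {γ : Path a b} (hγ : ∀ t, p (γ t) = p x₀) (k : ℕ) :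
    ∀ t, p ((γ.map (f.continuous.iterate k)) t) = p x₀ := fun t => by
  show p ((⇑f)^[k] (γ t)) = p x₀
  rw [fiber_iterate hf k, hγ]

theorem fiber_nPath {p : C(E, B)} {f : C(E, E)} (hf : ∀ x, p (f x) = p x) {x₀ : E}
    {ω : Path x₀ (f x₀)} (hω : ∀ t, p (ω t) = p x₀) :
    ∀ (n : ℕ) (t : I), p (nPath f ω n t) = p x₀
  | 0, _ => rfl
  | 1, t => hω t
  | (n + 2), t => by
      simp only [nPath]
      exact fiber_trans (fiber_nPath hf hω (n + 1)) (fiber_map hf hω (n + 1)) t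

/-- The loop `f^{kω}(θ) = k(ω) ∗ f^k(θ) ∗ k(ω)⁻¹` at `x₀`. -/
noncomputable def fpowLoop (f : C(E, E)) {x₀ : E} (ω : Path x₀ (f x₀)) (k : ℕ) (θ : Path x₀ x₀) :
    Path x₀ x₀ :=
  ((nPath f ω k).trans (θ.map (f.continuous.iterate k))).trans (nPath f ω k).symm

/-- `f^{kω}` applied to a fiber loop is again a fiber loop. -/
noncomputable def fpowFiberLoop (p : C(E, B)) (f : C(E, E)) (hf : ∀ x, p (f x) = p x) {x₀ : E}
    (ω : Path x₀ (f x₀)) (hω : ∀ t, p (ω t) = p x₀) (k : ℕ) (θ : FiberLoop p x₀) :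
    FiberLoop p x₀ :=
  ⟨fpowLoop f ω k θ.1,
    fiber_trans (fiber_trans (fiber_nPath hf hω k) (fiber_map hf θ.2 k))
      (fiber_symm (fiber_nPath hf hω k))⟩

/-- Auxiliary product `f^{0·mω}(θ) ∗ f^{1·mω}(θ) ∗ ⋯ ∗ f^{(j−1)·mω}(θ)`. -/
noncomputable def gammaAux (f : C(E, E)) {x₀ : E} (ω : Path x₀ (f x₀)) (m : ℕ) (θ : Path x₀ x₀) :
    ℕ → Path x₀ x₀
  | 0 => Path.refl x₀
  | (j + 1) => (gammaAux f ω m θ j).trans (fpowLoop f ω (j * m) θ)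

/-- The loop `γ_{m,n}(θ) = θ ∗ f^{mω}(θ) ∗ f^{2mω}(θ) ∗ ⋯ ∗ f^{(n−m)ω}(θ)`. -/
noncomputable def gammaLoop (f : C(E, E)) {x₀ : E} (ω : Path x₀ (f x₀)) (m n : ℕ) (θ : Path x₀ x₀) :
    Path x₀ x₀ :=
  gammaAux f ω m θ (n / m)

theorem fiber_gammaAux {p : C(E, B)} {f : C(E, E)} (hf : ∀ x, p (f x) = p x) {x₀ : E}
    {ω : Path x₀ (f x₀)} (hω : ∀ t, p (ω t) = p x₀) (m : ℕ) (θ : FiberLoop p x₀) :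
    ∀ (j : ℕ) (t : I), p (gammaAux f ω m θ.1 j t) = p x₀
  | 0, _ => rfl
  | (j + 1), t => by
    simp only [gammaAux]
    exact fiber_trans (fiber_gammaAux hf hω m θ j)
      (fpowFiberLoop p f hf ω hω (j * m) θ).2 t

/-- `γ_{m,n}` applied to a fiber loop is again a fiber loop. -/
noncomputable def gammaFiberLoop (p : C(E, B)) (f : C(E, E)) (hf : ∀ x, p (f x) = p x) {x₀ : E}
    (ω : Path x₀ (f x₀)) (hω : ∀ t, p (ω t) = p x₀) (m n : ℕ) (θ : FiberLoop p x₀) :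
    FiberLoop p x₀ :=
  ⟨gammaLoop f ω m n θ.1, fiber_gammaAux hf hω m θ (n / m)⟩

/-- `F` realizes the induced function `[f^ω]` on the Reidemeister classes of `f^n` over `B`. -/
def IsFOmegaMap (p : C(E, B)) (f : C(E, E)) (hf : ∀ x, p (f x) = p x) {x₀ : E}
    (ω : Path x₀ (f x₀)) (hω : ∀ t, p (ω t) = p x₀) (n : ℕ)
    (F : ReidemeisterSetB p (iterC f n) (nPath f ω n) →
      ReidemeisterSetB p (iterC f n) (nPath f ω n)) : Prop :=
  ∀ θ : FiberLoop p x₀,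
    F (Quot.mk _ θ) = Quot.mk _ (fpowFiberLoop p f hf ω hω 1 θ)

/-- `G` realizes the induced function `[γ_{m,n}]` from the Reidemeister classes of `f^m`
to those of `f^n` over `B`. -/
def IsGammaMap (p : C(E, B)) (f : C(E, E)) (hf : ∀ x, p (f x) = p x) {x₀ : E}
    (ω : Path x₀ (f x₀)) (hω : ∀ t, p (ω t) = p x₀) (m n : ℕ)
    (G : ReidemeisterSetB p (iterC f m) (nPath f ω m) →
      ReidemeisterSetB p (iterC f n) (nPath f ω n)) : Prop :=
  ∀ θ : FiberLoop p x₀,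
    G (Quot.mk _ θ) = Quot.mk _ (gammaFiberLoop p f hf ω hω m n θ)

/-- Fixed points of a continuous self-map. -/
def FixPt (g : C(E, E)) : Type := {x : E // g x = x}

/-- Nielsen equivalence over `B` of fixed points of `g`. -/
def NielsenRelB (p : C(E, B)) (g : C(E, E)) : FixPt g → FixPt g → Prop := fun x y =>
  ∃ (lam : Path x.1 y.1) (H : C(I × I, E)),
    (∀ t, H (t, 0) = lam t) ∧
    (∀ t, H (t, 1) = g (lam t)) ∧
    (∀ s, H (0, s) = x.1) ∧
    (∀ s, H (1, s) = y.1) ∧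
    (∀ t s, p (H (t, s)) = p (lam t))

/-- The set of Nielsen classes over `B`. -/
def NielsenSetB (p : C(E, B)) (g : C(E, E)) : Type := Quot (NielsenRelB p g)

/-- The space `E_B(g) = {(x, α) : p∘α const, α(0) = x, α(1) = g(x)}` with the topology
induced from `E × C(I, E)` (compact-open topology on paths). -/
def EBSpace (p : C(E, B)) (g : C(E, E)) : Type :=
  {z : E × C(I, E) // (∀ t, p (z.2 t) = p z.1) ∧ z.2 0 = z.1 ∧ z.2 1 = g z.1}

instance (p : C(E, B)) (g : C(E, E)) : TopologicalSpace (EBSpace p g) :=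
  instTopologicalSpaceSubtype

/-- Path components of a space. -/
def Pi0 (X : Type) [TopologicalSpace X] : Type := Quot (@Joined X _)

/-- The map `g_B : Fix(g) → E_B(g)`, `x ↦ (x, constant path at x)`. -/
def gBMap (p : C(E, B)) (g : C(E, E)) (x : FixPt g) : EBSpace p g :=
  ⟨(x.1, ContinuousMap.const I x.1), fun _ => rfl, rfl, x.2.symm⟩

instance (g : C(E, E)) : TopologicalSpace (FixPt g) := instTopologicalSpaceSubtype

/-- The Reidemeister class over `B` of a fiber loop. -/
def rClass (p : C(E, B)) (g : C(E, E)) {x₀ : E} (w : Path x₀ (g x₀)) (θ : FiberLoop p x₀) :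
    ReidemeisterSetB p g w := Quot.mk _ θ

/-- The Nielsen class over `B` of a fixed point. -/
def nClass (p : C(E, B)) {g : C(E, E)} (x : FixPt g) : NielsenSetB p g := Quot.mk _ x

/-- The path component of a point. -/
def piComp {X : Type} [TopologicalSpace X] (x : X) : Pi0 X := Quot.mk _ x

/-- A Reidemeister class of `f^n` over `B` is reducible to `m` if it lies in the image of
the induced function `[γ_{m,n}]`. -/
def ReducibleTo (p : C(E, B)) (f : C(E, E)) (hf : ∀ x, p (f x) = p x) {x₀ : E}
    (ω : Path x₀ (f x₀)) (hω : ∀ t, p (ω t) = p x₀) (n m : ℕ)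
    (a : ReidemeisterSetB p (iterC f n) (nPath f ω n)) : Prop :=
  ∃ G : ReidemeisterSetB p (iterC f m) (nPath f ω m) →
      ReidemeisterSetB p (iterC f n) (nPath f ω n),
    IsGammaMap p f hf ω hω m n G ∧ a ∈ Set.range G

/-!
A class reducible to `m` is represented by `γ = θ ∗ f^{mω}(θ) ∗ ⋯ ∗ f^{(n-m)ω}(θ)` for a loop
`θ` in the fiber `Y`. On `π₁(Y, x₀)` the operators `f^{kω}` are homomorphisms with
`f^{jω} ∘ f^{kω} = f^{(j+k)ω}`, so applying `f^{mω} = (f^ω)^m` to the product telescopes: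
`f^{mω}(γ) = θ⁻¹ γ f^{nω}(θ)`, i.e. `(f^ω)^m(γ) ∗ n(ω) ≃ θ⁻¹ ∗ γ ∗ n(ω) ∗ f^n(θ)` in `Y`.
A homotopy of this shape can be reparametrized into a square in `Y` with bottom `θ`, top
`f^n ∘ θ` and sides `γ ∗ n(ω)`, `(f^ω)^m(γ) ∗ n(ω)`, which is exactly a Reidemeister relation
over `B`. Hence `[f^ω]^m` fixes the class, and since the orbit length is its minimal period,
it divides every such `m`, in particular the depth.
-/

namespace Path

variable {X : Type*} [TopologicalSpace X] {x y z w : X}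

/-- `conjHomotopy c L d` at time `t` runs along `(c⁻¹ ∗ L) ∗ d` over `[(1 - t)/4, (1 + t)/2]`:
from `c t` back along `c`, across `L`, and along `d` up to `d t`. -/
noncomputable def conjHomotopy (c : Path x y) (L : Path x z) (d : Path z w) :
    ContinuousMap.Homotopy (L : C(I, X)) ((c.symm.trans L).trans d : C(I, X)) where
  toFun q := ((c.symm.trans L).trans d).extend ((1 - q.2) * (1 - q.1) / 4 + q.2 * (1 + q.1) / 2)
  continuous_toFun := by fun_prop
  map_zero_left s := by
    simp only [Set.Icc.coe_zero, ContinuousMap.coe_coe]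
    rw [extend_trans_of_le_half _ _ (by linarith [s.2.2]),
      extend_trans_of_half_le _ _ (by linarith [s.2.1]), ← extend_extends' L s]
    congr 1; ring
  map_one_left s := by
    simp only [Set.Icc.coe_one, ContinuousMap.coe_coe]
    rw [← extend_extends']
    congr 1; ring

theorem conjHomotopy_apply (c : Path x y) (L : Path x z) (d : Path z w) (t s : I) :
    conjHomotopy c L d (t, s) =
      ((c.symm.trans L).trans d).extend ((1 - s) * (1 - t) / 4 + s * (1 + t) / 2) :=
  rfl

theorem conjHomotopy_apply_zero_right (c : Path x y) (L : Path x z) (d : Path z w) (t : I) :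
    conjHomotopy c L d (t, 0) = c t := by
  rw [conjHomotopy_apply, Set.Icc.coe_zero, sub_zero, one_mul, zero_mul, zero_div, add_zero,
    extend_trans_of_le_half _ _ (by linarith [t.2.1]),
    extend_trans_of_le_half _ _ (by linarith [t.2.1]), extend_symm_apply, ← extend_extends' c t]
  congr 1; ring

theorem conjHomotopy_apply_one_right (c : Path x y) (L : Path x z) (d : Path z w) (t : I) :
    conjHomotopy c L d (t, 1) = d t := by
  rw [conjHomotopy_apply, Set.Icc.coe_one, sub_self, zero_mul, zero_div, zero_add, one_mul,
    extend_trans_of_half_le _ _ (by linarith [t.2.1]), ← extend_extends' d t]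
  congr 1; ring

theorem exists_square_of_homotopic (c : Path x y) (L : Path x z) (d : Path z w) (R : Path y w)
    (h : ((c.symm.trans L).trans d).Homotopic R) :
    ∃ H : C(I × I, X), (∀ t, H (t, 0) = (c.trans (Path.refl y)) t) ∧ (∀ s, H (0, s) = L s) ∧
      (∀ t, H (t, 1) = (d.trans (Path.refl w)) t) ∧ ∀ s, H (1, s) = R s := by
  obtain ⟨G⟩ := h
  let H := (conjHomotopy c L d).trans G.toHomotopy
  refine ⟨H.toContinuousMap, fun t => ?_, H.apply_zero, fun t => ?_, H.apply_one⟩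
  all_goals
    show H _ = _
    rw [ContinuousMap.Homotopy.trans_apply, trans_apply]
    split_ifs
  · exact conjHomotopy_apply_zero_right c L d _
  · exact G.source _
  · exact conjHomotopy_apply_one_right c L d _
  · exact G.target _

end Path

namespace Path.Homotopic.Quotient

variable {X Y : Type*} [TopologicalSpace X] [TopologicalSpace Y] {x₀ x₁ x₂ : X}

theorem symm_trans_trans (γ : Path.Homotopic.Quotient x₀ x₁)
    (δ : Path.Homotopic.Quotient x₁ x₂) : γ.symm.trans (γ.trans δ) = δ := by
  rw [← trans_assoc, symm_trans, refl_trans]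

theorem trans_symm_rev (γ : Path.Homotopic.Quotient x₀ x₁) (δ : Path.Homotopic.Quotient x₁ x₂) :
    (γ.trans δ).symm = δ.symm.trans γ.symm := by
  induction γ using Quotient.ind
  induction δ using Quotient.ind
  exact congrArg mk (Path.trans_symm _ _)

theorem map_trans (γ : Path.Homotopic.Quotient x₀ x₁) (δ : Path.Homotopic.Quotient x₁ x₂)
    (f : C(X, Y)) : (γ.trans δ).map f = (γ.map f).trans (δ.map f) := by
  induction γ using Quotient.ind
  induction δ using Quotient.ind
  exact congrArg mk (Path.map_trans _ _ _)

theorem map_symm (γ : Path.Homotopic.Quotient x₀ x₁) (f : C(X, Y)) :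
    γ.symm.map f = (γ.map f).symm := by
  induction γ using Quotient.ind
  exact congrArg mk (Path.map_symm _ f.continuous)

noncomputable def conj (γ : Path.Homotopic.Quotient x₀ x₁) (z : Path.Homotopic.Quotient x₁ x₁) :
    Path.Homotopic.Quotient x₀ x₀ :=
  (γ.trans z).trans γ.symm

theorem conj_trans (γ : Path.Homotopic.Quotient x₀ x₁) (z₁ z₂ : Path.Homotopic.Quotient x₁ x₁) :
    conj γ (z₁.trans z₂) = (conj γ z₁).trans (conj γ z₂) := by
  simp only [conj, trans_assoc, symm_trans_trans]

theorem conj_refl (γ : Path.Homotopic.Quotient x₀ x₁) : conj γ (refl x₁) = refl x₀ := by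
  rw [conj, trans_refl, trans_symm]

theorem conj_conj (γ : Path.Homotopic.Quotient x₀ x₁) (δ : Path.Homotopic.Quotient x₁ x₂)
    (z : Path.Homotopic.Quotient x₂ x₂) : conj γ (conj δ z) = conj (γ.trans δ) z := by
  simp only [conj, trans_symm_rev, trans_assoc]

theorem map_conj (γ : Path.Homotopic.Quotient x₀ x₁) (z : Path.Homotopic.Quotient x₁ x₁)
    (f : C(X, Y)) : (conj γ z).map f = conj (γ.map f) (z.map f) := by
  rw [conj, conj, map_trans, map_trans, map_symm]

theorem conj_trans_self (γ : Path.Homotopic.Quotient x₀ x₁) (z : Path.Homotopic.Quotient x₁ x₁) :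
    (conj γ z).trans γ = γ.trans z := by
  rw [conj, trans_assoc, symm_trans, trans_refl]

end Path.Homotopic.Quotient

section TwistedConjugation

open Path.Homotopic.Quotient (mk conj)

variable {X : Type} [TopologicalSpace X] (g : C(X, X)) {x : X} (ω : Path x (g x))

noncomputable def fpowClass (k : ℕ) (z : Path.Homotopic.Quotient x x) :
    Path.Homotopic.Quotient x x :=
  conj (mk (nPath g ω k)) (z.map (iterC g k))

theorem mk_fpowLoop (k : ℕ) (α : Path x x) :
    mk (fpowLoop g ω k α) = fpowClass g ω k (mk α) :=
  rfl

theorem mk_nPath_succ (k : ℕ) :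
    mk (nPath g ω (k + 1)) = (mk (nPath g ω k)).trans ((mk ω).map (iterC g k)) := by
  rcases k with _ | k
  · exact (Path.Homotopic.Quotient.refl_trans _).symm
  · rfl

theorem fpowClass_zero (z : Path.Homotopic.Quotient x x) : fpowClass g ω 0 z = z := by
  have hmap : z.map (iterC g 0) = z := by
    induction z using Quotient.ind
    rfl
  rw [fpowClass, hmap]
  show ((Path.Homotopic.Quotient.refl x).trans z).trans (Path.Homotopic.Quotient.refl x) = z
  rw [Path.Homotopic.Quotient.refl_trans, Path.Homotopic.Quotient.trans_refl]

/- The endpoints `⇑(iterC g k) x` and `(⇑g)^[k] x` agree only after unfolding `iterC`, which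
`rw` does not do, so the groupoid identities below are applied by unification instead. -/
theorem fpowClass_fpowClass_one (k : ℕ) (z : Path.Homotopic.Quotient x x) :
    fpowClass g ω k (fpowClass g ω 1 z) = fpowClass g ω (k + 1) z := by
  have hmap : (z.map (iterC g 1)).map (iterC g k) = z.map (iterC g (k + 1)) :=
    (Path.Homotopic.Quotient.map_comp).symm
  rw [fpowClass, fpowClass, fpowClass, mk_nPath_succ g ω k]
  exact (congrArg (conj _) ((Path.Homotopic.Quotient.map_conj _ _ _).trans
    (congrArg (conj _) hmap))).trans (Path.Homotopic.Quotient.conj_conj _ _ _)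

theorem fpowClass_eq_iterate (k : ℕ) : fpowClass g ω k = (fpowClass g ω 1)^[k] := by
  induction k with
  | zero => exact funext (fpowClass_zero g ω)
  | succ k ih =>
    funext z
    rw [Function.iterate_succ_apply, ← ih, fpowClass_fpowClass_one]

theorem fpowClass_add (j k : ℕ) (z : Path.Homotopic.Quotient x x) :
    fpowClass g ω j (fpowClass g ω k z) = fpowClass g ω (j + k) z := by
  rw [fpowClass_eq_iterate g ω j, fpowClass_eq_iterate g ω k, fpowClass_eq_iterate g ω (j + k),
    Function.iterate_add_apply]

theorem fpowClass_trans (k : ℕ) (z₁ z₂ : Path.Homotopic.Quotient x x) :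
    fpowClass g ω k (z₁.trans z₂) = (fpowClass g ω k z₁).trans (fpowClass g ω k z₂) := by
  rw [fpowClass, fpowClass, fpowClass]
  exact (congrArg (conj _) (Path.Homotopic.Quotient.map_trans z₁ z₂ (iterC g k))).trans
    (Path.Homotopic.Quotient.conj_trans _ _ _)

theorem fpowClass_refl (k : ℕ) :
    fpowClass g ω k (Path.Homotopic.Quotient.refl x) = Path.Homotopic.Quotient.refl x :=
  Path.Homotopic.Quotient.conj_refl _

theorem mk_iterate_fpowLoop (m : ℕ) (β : Path x x) :
    mk ((fpowLoop g ω 1)^[m] β) = fpowClass g ω m (mk β) := by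
  induction m generalizing β with
  | zero => exact (fpowClass_zero g ω _).symm
  | succ m ih =>
    rw [Function.iterate_succ_apply, ih, mk_fpowLoop, fpowClass_fpowClass_one]

theorem fpowClass_mk_gammaAux (m : ℕ) (α : Path x x) (j : ℕ) :
    fpowClass g ω m (mk (gammaAux g ω m α j)) =
      (mk α).symm.trans ((mk (gammaAux g ω m α j)).trans (fpowClass g ω (j * m) (mk α))) := by
  induction j with
  | zero =>
    rw [Nat.zero_mul, fpowClass_zero, gammaAux, Path.Homotopic.Quotient.mk_refl, fpowClass_refl,
      Path.Homotopic.Quotient.refl_trans, Path.Homotopic.Quotient.symm_trans]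
  | succ j ih =>
    rw [gammaAux, Path.Homotopic.Quotient.mk_trans, mk_fpowLoop, fpowClass_trans, ih,
      fpowClass_add, Nat.succ_mul, Nat.add_comm (j * m) m]
    simp only [Path.Homotopic.Quotient.trans_assoc]

theorem homotopic_iterate_fpowLoop_gammaLoop {m n : ℕ} (hmn : m ∣ n) (α : Path x x) :
    ((α.symm.trans ((gammaLoop g ω m n α).trans (nPath g ω n))).trans
        (α.map (iterC g n).continuous)).Homotopic
      (((fpowLoop g ω 1)^[m] (gammaLoop g ω m n α)).trans (nPath g ω n)) := by
  rw [← Path.Homotopic.Quotient.eq, Path.Homotopic.Quotient.mk_trans _ (nPath g ω n),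
    mk_iterate_fpowLoop, gammaLoop, fpowClass_mk_gammaAux, Nat.div_mul_cancel hmn, fpowClass]
  simp only [Path.Homotopic.Quotient.mk_trans, Path.Homotopic.Quotient.mk_symm,
    Path.Homotopic.Quotient.trans_assoc]
  exact congrArg (fun w => (mk α).symm.trans ((mk _).trans w))
    (Path.Homotopic.Quotient.conj_trans_self _ _).symm

end TwistedConjugation

section Semiconj

variable {X X' : Type} [TopologicalSpace X] [TopologicalSpace X'] {h : X' → X}

theorem Path.coe_trans_eq_comp {a b c : X} {a' b' c' : X'} {P : Path a b} {Q : Path b c}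
    {P' : Path a' b'} {Q' : Path b' c'} (hP : ⇑P = h ∘ P') (hQ : ⇑Q = h ∘ Q') :
    ⇑(P.trans Q) = h ∘ P'.trans Q' := by
  funext t
  simp only [Path.trans_apply, Function.comp_apply]
  split_ifs <;> simp only [hP, hQ, Function.comp_apply]

theorem Path.coe_symm_eq_comp {a b : X} {a' b' : X'} {P : Path a b} {P' : Path a' b'}
    (hP : ⇑P = h ∘ P') : ⇑P.symm = h ∘ P'.symm :=
  funext fun t => congrFun hP (σ t)

variable {f : C(X, X)} {f' : C(X', X')}

theorem Path.coe_map_iterate_eq_comp (hs : Function.Semiconj h f' f) {a b : X} {a' b' : X'}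
    {P : Path a b} {P' : Path a' b'} (hP : ⇑P = h ∘ P') (k : ℕ) :
    ⇑(P.map (f.continuous.iterate k)) = h ∘ P'.map (f'.continuous.iterate k) :=
  funext fun t => by
    simp only [Path.map_coe, Function.comp_apply, hP, (hs.iterate_right k).eq]

variable {x : X} {x' : X'} {ω : Path x (f x)} {ω' : Path x' (f' x')}

theorem coe_nPath_eq_comp (hs : Function.Semiconj h f' f) (hω : ⇑ω = h ∘ ω') :
    ∀ k, ⇑(nPath f ω k) = h ∘ nPath f' ω' k
  | 0 => funext fun _ => show x = h x' by simpa using congrFun hω 0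
  | 1 => hω
  | k + 2 => Path.coe_trans_eq_comp (coe_nPath_eq_comp hs hω (k + 1))
      (Path.coe_map_iterate_eq_comp hs hω (k + 1))

theorem coe_fpowLoop_eq_comp (hs : Function.Semiconj h f' f) (hω : ⇑ω = h ∘ ω')
    {α : Path x x} {α' : Path x' x'} (hα : ⇑α = h ∘ α') (k : ℕ) :
    ⇑(fpowLoop f ω k α) = h ∘ fpowLoop f' ω' k α' :=
  Path.coe_trans_eq_comp
    (Path.coe_trans_eq_comp (coe_nPath_eq_comp hs hω k) (Path.coe_map_iterate_eq_comp hs hα k))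
    (Path.coe_symm_eq_comp (coe_nPath_eq_comp hs hω k))

theorem coe_iterate_fpowLoop_eq_comp (hs : Function.Semiconj h f' f) (hω : ⇑ω = h ∘ ω')
    {α : Path x x} {α' : Path x' x'} (hα : ⇑α = h ∘ α') (k : ℕ) :
    ⇑((fpowLoop f ω 1)^[k] α) = h ∘ (fpowLoop f' ω' 1)^[k] α' := by
  induction k generalizing α α' with
  | zero => exact hα
  | succ k ih => exact ih (coe_fpowLoop_eq_comp hs hω hα 1)

theorem coe_gammaAux_eq_comp (hs : Function.Semiconj h f' f) (hω : ⇑ω = h ∘ ω')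
    {α : Path x x} {α' : Path x' x'} (hα : ⇑α = h ∘ α') (m : ℕ) :
    ∀ j, ⇑(gammaAux f ω m α j) = h ∘ gammaAux f' ω' m α' j
  | 0 => funext fun _ => show x = h x' by simpa using congrFun hω 0
  | j + 1 => Path.coe_trans_eq_comp (coe_gammaAux_eq_comp hs hω hα m j)
      (coe_fpowLoop_eq_comp hs hω hα (j * m))

end Semiconj

section Fiber

variable (p : C(E, B)) (x₀ : E)

abbrev Fiber : Type := {y : E // p y = p x₀}

variable {p x₀}

def fiberRestrict {f : C(E, E)} (hf : ∀ x, p (f x) = p x) : C(Fiber p x₀, Fiber p x₀) :=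
  ⟨fun y => ⟨f y, (hf y).trans y.2⟩, (f.continuous.comp continuous_subtype_val).subtype_mk _⟩

def Path.liftToFiber {a b : E} (γ : Path a b) (hγ : ∀ t, p (γ t) = p x₀) :
    Path (⟨a, by simpa using hγ 0⟩ : Fiber p x₀) ⟨b, by simpa using hγ 1⟩ where
  toFun t := ⟨γ t, hγ t⟩
  continuous_toFun := γ.continuous.subtype_mk _
  source' := Subtype.ext γ.source
  target' := Subtype.ext γ.target

theorem reidemeisterRelB_of_homotopic {g : C(E, E)} {w : Path x₀ (g x₀)}
    {gY : C(Fiber p x₀, Fiber p x₀)} (hgY : Function.Semiconj Subtype.val gY g)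
    {wY : Path ⟨x₀, rfl⟩ (gY ⟨x₀, rfl⟩)} (hw : ⇑w = Subtype.val ∘ wY)
    {θ θ' : FiberLoop p x₀} {θY θ'Y α : Path (⟨x₀, rfl⟩ : Fiber p x₀) ⟨x₀, rfl⟩}
    (hθ : ⇑θ.1 = Subtype.val ∘ θY) (hθ' : ⇑θ'.1 = Subtype.val ∘ θ'Y)
    (h : ((α.symm.trans (θY.trans wY)).trans (α.map gY.continuous)).Homotopic (θ'Y.trans wY)) :
    ReidemeisterRelB p g w θ θ' := by
  obtain ⟨H, hbot, hleft, htop, hright⟩ := Path.exists_square_of_homotopic α _ _ _ h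
  have hc : ⇑((α.map gY.continuous).trans (Path.refl _)) = gY ∘ α.trans (Path.refl _) :=
    Path.coe_trans_eq_comp rfl rfl
  refine ⟨(α.trans (Path.refl _)).map continuous_subtype_val,
    (ContinuousMap.mk Subtype.val continuous_subtype_val).comp H, fun t => ?_, fun s => ?_,
    fun t => ?_, fun s => ?_, fun t s => ?_⟩
  · exact congrArg Subtype.val (hbot t)
  · exact (congrArg Subtype.val (hleft s)).trans (congrFun (Path.coe_trans_eq_comp hθ hw) s).symm
  · exact (congrArg Subtype.val ((htop t).trans (congrFun hc t))).trans (hgY _)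
  · exact (congrArg Subtype.val (hright s)).trans
      (congrFun (Path.coe_trans_eq_comp hθ' hw) s).symm
  · exact (H (t, s)).2.trans ((α.trans (Path.refl _)) t).2.symm

end Fiber

section Orbit

variable {p : C(E, B)} {f : C(E, E)} {hf : ∀ x, p (f x) = p x} {x₀ : E} {ω : Path x₀ (f x₀)}
  {hω : ∀ t, p (ω t) = p x₀}

theorem mk_iterate_fpowFiberLoop_gammaFiberLoop {m n : ℕ} (hmn : m ∣ n) (θ : FiberLoop p x₀) :
    Quot.mk (ReidemeisterRelB p (iterC f n) (nPath f ω n))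
        ((fpowFiberLoop p f hf ω hω 1)^[m] (gammaFiberLoop p f hf ω hω m n θ)) =
      Quot.mk _ (gammaFiberLoop p f hf ω hω m n θ) := by
  let fY := fiberRestrict (x₀ := x₀) hf
  let ωY := Path.liftToFiber ω hω
  let γY := gammaLoop fY ωY m n (Path.liftToFiber θ.1 θ.2)
  have hs : Function.Semiconj Subtype.val fY f := fun _ => rfl
  have hωY : ⇑ω = Subtype.val ∘ ωY := rfl
  have hγ : ⇑(gammaFiberLoop p f hf ω hω m n θ).1 = Subtype.val ∘ γY :=
    coe_gammaAux_eq_comp hs hωY rfl m (n / m)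
  have hT : Function.Semiconj Subtype.val (fpowFiberLoop p f hf ω hω 1) (fpowLoop f ω 1) :=
    fun _ => rfl
  have hγ' : ⇑((fpowFiberLoop p f hf ω hω 1)^[m] (gammaFiberLoop p f hf ω hω m n θ)).1 =
      Subtype.val ∘ (fpowLoop fY ωY 1)^[m] γY :=
    (congrArg (⇑) (hT.iterate_right m _)).trans (coe_iterate_fpowLoop_eq_comp hs hωY hγ m)
  have hsn : Function.Semiconj Subtype.val (iterC fY n) (iterC f n) := hs.iterate_right n
  exact (Quot.sound (reidemeisterRelB_of_homotopic hsn (coe_nPath_eq_comp hs hωY n) hγ hγ'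
    (homotopic_iterate_fpowLoop_gammaLoop fY ωY hmn _))).symm

variable {n : ℕ}
  {F : ReidemeisterSetB p (iterC f n) (nPath f ω n) → ReidemeisterSetB p (iterC f n) (nPath f ω n)}

theorem iterate_mk_of_isFOmegaMap (hF : IsFOmegaMap p f hf ω hω n F) (k : ℕ)
    (θ : FiberLoop p x₀) :
    F^[k] (Quot.mk _ θ) = Quot.mk _ ((fpowFiberLoop p f hf ω hω 1)^[k] θ) :=
  (Function.Semiconj.iterate_right (fun θ => (hF θ).symm) k θ).symm

theorem iterate_eq_self_of_reducibleTo (hF : IsFOmegaMap p f hf ω hω n F) {m : ℕ} (hmn : m ∣ n)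
    {a : ReidemeisterSetB p (iterC f n) (nPath f ω n)} (ha : ReducibleTo p f hf ω hω n m a) :
    F^[m] a = a := by
  obtain ⟨G, hG, b, rfl⟩ := ha
  induction b using Quot.ind with
  | mk θ => rw [hG θ, iterate_mk_of_isFOmegaMap hF, mk_iterate_fpowFiberLoop_gammaFiberLoop hmn]

end Orbit

theorem Function.minimalPeriod_eq_of_isLeast {α : Type*} {F : α → α} {a : α} {l : ℕ}
    (hl : IsLeast {r : ℕ | 0 < r ∧ F^[r] a = a} l) : Function.minimalPeriod F a = l :=
  le_antisymm (Function.IsPeriodicPt.minimalPeriod_le hl.1.1 hl.1.2)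
    (hl.2 ⟨Function.minimalPeriod_pos_of_mem_periodicPts ⟨l, hl.1⟩,
      Function.isPeriodicPt_minimalPeriod F a⟩)

theorem orbit_length_dvd_depth_algebraic_general {E B : Type} [TopologicalSpace E] [TopologicalSpace B]
    (p : C(E, B))
    (f : C(E, E)) (hf : ∀ x, p (f x) = p x)
    (x₀ : E) (ω : Path x₀ (f x₀)) (hω : ∀ t, p (ω t) = p x₀)
    (n l d : ℕ)
    (a : ReidemeisterSetB p (iterC f n) (nPath f ω n))
    (F : ReidemeisterSetB p (iterC f n) (nPath f ω n) →
      ReidemeisterSetB p (iterC f n) (nPath f ω n))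
    (hF : IsFOmegaMap p f hf ω hω n F)
    (hl : IsLeast {r : ℕ | 0 < r ∧ F^[r] a = a} l)
    (hd : IsLeast {m : ℕ | 0 < m ∧ m ∣ n ∧ ReducibleTo p f hf ω hω n m a} d) :
    (∀ m, 0 < m → m ∣ n → ReducibleTo p f hf ω hω n m a → F^[m] a = a) ∧ l ∣ d := by
  have hfix : ∀ m, 0 < m → m ∣ n → ReducibleTo p f hf ω hω n m a → F^[m] a = a :=
    fun _ _ hmn ha => iterate_eq_self_of_reducibleTo hF hmn ha
  refine ⟨hfix, ?_⟩
  rw [← Function.minimalPeriod_eq_of_isLeast hl]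
  exact Function.IsPeriodicPt.minimalPeriod_dvd (hfix d hd.1.1 hd.1.2.1 hd.1.2.2)

theorem orbit_length_dvd_depth_algebraic {E B : Type} [TopologicalSpace E] [TopologicalSpace B]
    [CompactSpace E] [CompactSpace B] [PathConnectedSpace E] [PathConnectedSpace B]
    [T2Space E] [T2Space B] {dE dB : ℕ}
    [ChartedSpace (EuclideanSpace ℝ (Fin dE)) E]
    [ChartedSpace (EuclideanSpace ℝ (Fin dB)) B]
    (p : C(E, B)) (hp : IsHurewiczFibration p)
    (f : C(E, E)) (hf : ∀ x, p (f x) = p x)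
    (x₀ : E) (ω : Path x₀ (f x₀)) (hω : ∀ t, p (ω t) = p x₀)
    (n l d : ℕ) (hn : 0 < n)
    (a : ReidemeisterSetB p (iterC f n) (nPath f ω n))
    (F : ReidemeisterSetB p (iterC f n) (nPath f ω n) →
      ReidemeisterSetB p (iterC f n) (nPath f ω n))
    (hF : IsFOmegaMap p f hf ω hω n F)
    (hl : IsLeast {r : ℕ | 0 < r ∧ F^[r] a = a} l)
    (hd : IsLeast {m : ℕ | 0 < m ∧ m ∣ n ∧ ReducibleTo p f hf ω hω n m a} d) :
    (∀ m, 0 < m → m ∣ n → ReducibleTo p f hf ω hω n m a → F^[m] a = a) ∧ l ∣ d :=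
  orbit_length_dvd_depth_algebraic_general p f hf x₀ ω hω n l d a F hF hl hd
end

section
/- Let H: E × I → E be a homotopy over B from f to g, let ν = ω ∗ H(x₀, ·), and define H^n inductively by H^1 = H and H^n(x,t) = H^{n−1}(H(x,t), t). Then for every n ≥ 1 the path n(ν) is homotopic, relative to endpoints and by a homotopy whose image lies in the fiber p⁻¹(p(x₀)), to the path n(ω) ∗ H^n(x₀, ·). -/
open unitInterval

variable {E B : Type} [TopologicalSpace E] [TopologicalSpace B]

/-- The iterated homotopy `H^n`, defined by `H⁰(x,t) = x` and `H^{n+1}(x,t) = Hⁿ(H(x,t),t)`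
(so that `H¹ = H`). -/
def homotopyIter (H : C(E × I, E)) : ℕ → C(E × I, E)
  | 0 => ⟨fun z => z.1, continuous_fst⟩
  | (n + 1) => ⟨fun z => homotopyIter H n (H z, z.2),
      (homotopyIter H n).continuous.comp (H.continuous.prodMk continuous_snd)⟩

theorem homotopyIter_zero {f : C(E, E)} {H : C(E × I, E)} (hK₀ : ∀ x, H (x, 0) = f x) :
    ∀ (n : ℕ) (x : E), homotopyIter H n (x, 0) = (⇑f)^[n] x
  | 0, _ => rfl
  | (n + 1), x => by
      show homotopyIter H n (H (x, 0), 0) = (⇑f)^[n + 1] x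
      rw [hK₀ x]
      exact homotopyIter_zero hK₀ n (f x)

theorem homotopyIter_one {g : C(E, E)} {H : C(E × I, E)} (hK₁ : ∀ x, H (x, 1) = g x) :
    ∀ (n : ℕ) (x : E), homotopyIter H n (x, 1) = (⇑g)^[n] x
  | 0, _ => rfl
  | (n + 1), x => by
      show homotopyIter H n (H (x, 1), 1) = (⇑g)^[n + 1] x
      rw [hK₁ x]
      exact homotopyIter_one hK₁ n (g x)

theorem fiber_homotopyIter {p : C(E, B)} {H : C(E × I, E)}
    (hKB : ∀ x t, p (H (x, t)) = p x) :
    ∀ (n : ℕ) (x : E) (t : I), p (homotopyIter H n (x, t)) = p x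
  | 0, _, _ => rfl
  | (n + 1), x, t => by
      show p (homotopyIter H n (H (x, t), t)) = p x
      rw [fiber_homotopyIter hKB n (H (x, t)) t, hKB x t]

/-- The path `t ↦ Hⁿ(x₀, t)` from `fⁿ(x₀)` to `gⁿ(x₀)`. -/
def hIterPath {f g : C(E, E)} (H : C(E × I, E)) (hK₀ : ∀ x, H (x, 0) = f x)
    (hK₁ : ∀ x, H (x, 1) = g x) (n : ℕ) (x₀ : E) :
    Path ((⇑f)^[n] x₀) ((⇑g)^[n] x₀) where
  toFun := fun t => homotopyIter H n (x₀, t)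
  continuous_toFun := (homotopyIter H n).continuous.comp (continuous_const.prodMk continuous_id)
  source' := homotopyIter_zero hK₀ n x₀
  target' := homotopyIter_one hK₁ n x₀

/-!
The fibre `Y = p⁻¹(p x₀)` is invariant under `f`, `g` and every `H(·, t)`, so it suffices to prove
the statement for paths and homotopies in an arbitrary space and apply it inside `Y`. There one
inducts on `n`: `(n+1)(ν) = n(ν) ∗ gⁿ(ν) ≃ n(ω) ∗ Hⁿ(x₀, ·) ∗ gⁿ(ν)`. The square
`(s, t) ↦ Hⁿ(ν s, t)` turns `Hⁿ(x₀, ·) ∗ gⁿ(ν)` into `fⁿ(ν) ∗ Hⁿ(g x₀, ·) =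
fⁿ(ω) ∗ fⁿ(H(x₀, ·)) ∗ Hⁿ(g x₀, ·)`, and the last two factors are the bottom and right edges of
the square `(s, t) ↦ Hⁿ(H(x₀, s), t)`, whose diagonal is `Hⁿ⁺¹(x₀, ·)`.
-/

instance : ContractibleSpace I :=
  (convex_Icc (0 : ℝ) 1).contractibleSpace ⟨0, unitInterval.zero_mem⟩

section Homotopic

variable {X : Type} [TopologicalSpace X]

local infix:50 " ∼ " => Path.Homotopic

theorem Path.Homotopic.trans_diagonal (G : C(I × I, X)) {a b c : X}
    {α : Path a b} {β : Path b c} {δ : Path a c} (hα : ∀ s, α s = G (s, 0))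
    (hβ : ∀ t, β t = G (1, t)) (hδ : ∀ t, δ t = G (t, t)) : α.trans β ∼ δ := by
  let bottomRight : Path ((0, 0) : I × I) (1, 1) :=
    (Path.id.prod (Path.refl 0)).trans ((Path.refl 1).prod Path.id)
  have h := (SimplyConnectedSpace.paths_homotopic bottomRight (Path.id.prod Path.id)).map G
  have ha : a = G (0, 0) := α.source.symm.trans (hα 0)
  have hc : c = G (1, 1) := δ.target.symm.trans (hδ 1)
  convert h.pathCast ha hc using 1 <;> ext t
  · simp [bottomRight, Path.trans_apply, hα, hβ]
  · simp [hδ]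

theorem nPath_succ_homotopic (f : C(X, X)) {x₀ : X} (ω : Path x₀ (f x₀)) (n : ℕ) :
    nPath f ω (n + 1) ∼ (nPath f ω n).trans (ω.map (f.continuous.iterate n)) := by
  rcases n with _ | n
  · exact (Path.Homotopic.refl_trans ω).symm
  · rfl

variable {f g : C(X, X)} (H : C(X × I, X)) (hK₀ : ∀ x, H (x, 0) = f x)
  (hK₁ : ∀ x, H (x, 1) = g x)

def iterHomotopy (n : ℕ) : (iterC f n).Homotopy (iterC g n) where
  toFun z := homotopyIter H n (z.2, z.1)
  map_zero_left := homotopyIter_zero hK₀ n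
  map_one_left := homotopyIter_one hK₁ n

theorem map_trans_hIterPath_homotopic (x₀ : X) (n : ℕ) :
    ((hIterPath H hK₀ hK₁ 1 x₀).map (f.continuous.iterate n)).trans
      (hIterPath H hK₀ hK₁ n (g x₀)) ∼ hIterPath H hK₀ hK₁ (n + 1) x₀ :=
  Path.Homotopic.trans_diagonal
    ((homotopyIter H n).comp ⟨fun z => (H (x₀, z.1), z.2), by fun_prop⟩)
    (fun s => (homotopyIter_zero hK₀ n _).symm)
    (fun t => congrArg (fun y => homotopyIter H n (y, t)) (hK₁ x₀).symm) (fun t => rfl)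

theorem hIterPath_trans_map_homotopic {x₀ : X} (ω : Path x₀ (f x₀))
    {ν : Path x₀ (g x₀)} (hν : ν ∼ ω.trans (hIterPath H hK₀ hK₁ 1 x₀)) (n : ℕ) :
    (hIterPath H hK₀ hK₁ n x₀).trans (ν.map (g.continuous.iterate n)) ∼
      (ω.map (f.continuous.iterate n)).trans (hIterPath H hK₀ hK₁ (n + 1) x₀) := by
  let η := hIterPath H hK₀ hK₁
  have hfn : Continuous (⇑f)^[n] := f.continuous.iterate n
  calc (η n x₀).trans (ν.map (g.continuous.iterate n))
      _ ∼ (ν.map hfn).trans (η n (g x₀)) :=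
        (Path.Homotopic.map_trans_evalAt (iterHomotopy H hK₀ hK₁ n) ν).symm
      _ ∼ ((ω.trans (η 1 x₀)).map hfn).trans (η n (g x₀)) := (hν.map (iterC f n)).hcomp (.refl _)
      _ = ((ω.map hfn).trans ((η 1 x₀).map hfn)).trans (η n (g x₀)) :=
        congrArg (·.trans (η n (g x₀))) (Path.map_trans ω (η 1 x₀) hfn)
      _ ∼ (ω.map hfn).trans (((η 1 x₀).map hfn).trans (η n (g x₀))) := .trans_assoc _ _ _
      _ ∼ (ω.map hfn).trans (η (n + 1) x₀) :=
        .hcomp (.refl _) (map_trans_hIterPath_homotopic H hK₀ hK₁ x₀ n)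

theorem nPath_homotopic_nPath_trans_hIterPath {x₀ : X} (ω : Path x₀ (f x₀))
    {ν : Path x₀ (g x₀)} (hν : ν ∼ ω.trans (hIterPath H hK₀ hK₁ 1 x₀)) (n : ℕ) :
    nPath g ν n ∼ (nPath f ω n).trans (hIterPath H hK₀ hK₁ n x₀) := by
  let η := hIterPath H hK₀ hK₁
  induction n with
  | zero => exact (Path.Homotopic.refl_trans _).symm
  | succ n ih =>
    have hfn : Continuous (⇑f)^[n] := f.continuous.iterate n
    have hgn : Continuous (⇑g)^[n] := g.continuous.iterate n
    calc nPath g ν (n + 1)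
        _ ∼ (nPath g ν n).trans (ν.map hgn) := nPath_succ_homotopic g ν n
        _ ∼ ((nPath f ω n).trans (η n x₀)).trans (ν.map hgn) := ih.hcomp (.refl _)
        _ ∼ (nPath f ω n).trans ((η n x₀).trans (ν.map hgn)) := .trans_assoc _ _ _
        _ ∼ (nPath f ω n).trans ((ω.map hfn).trans (η (n + 1) x₀)) :=
          .hcomp (.refl _) (hIterPath_trans_map_homotopic H hK₀ hK₁ ω hν n)
        _ ∼ ((nPath f ω n).trans (ω.map hfn)).trans (η (n + 1) x₀) :=
          (Path.Homotopic.trans_assoc _ _ _).symm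
        _ ∼ (nPath f ω (n + 1)).trans (η (n + 1) x₀) :=
          (nPath_succ_homotopic f ω n).symm.hcomp (.refl _)

end Homotopic

section Restriction

variable {X Y : Type} [TopologicalSpace X] [TopologicalSpace Y]

theorem Path.comp_trans {φ : X → Y} {a b c : X} {γ : Path a b} {δ : Path b c} {a' b' c' : Y}
    {γ' : Path a' b'} {δ' : Path b' c'} (hγ : φ ∘ γ = γ') (hδ : φ ∘ δ = δ') :
    φ ∘ γ.trans δ = γ'.trans δ' := by
  funext t
  simp only [Function.comp_apply, Path.trans_apply]
  split_ifs <;> simp [← hγ, ← hδ]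

theorem comp_nPath {φ : X → Y} {f : C(X, X)} {f' : C(Y, Y)} (hφ : Function.Semiconj φ f f')
    {x₀ : X} {ω : Path x₀ (f x₀)} {ω' : Path (φ x₀) (f' (φ x₀))} (hω : φ ∘ ω = ω') :
    ∀ n, φ ∘ nPath f ω n = nPath f' ω' n
  | 0 => rfl
  | 1 => hω
  | n + 2 => Path.comp_trans (comp_nPath hφ hω (n + 1)) <| by
      funext t
      exact ((hφ.iterate_right (n + 1)).eq (ω t)).trans (congrArg _ (congrFun hω t))

theorem apply_homotopyIter {φ : X → Y} {H : C(X × I, X)} {H' : C(Y × I, Y)}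
    (hφ : ∀ x t, φ (H (x, t)) = H' (φ x, t)) :
    ∀ n x t, φ (homotopyIter H n (x, t)) = homotopyIter H' n (φ x, t)
  | 0, _, _ => rfl
  | n + 1, x, t => (apply_homotopyIter hφ n (H (x, t)) t).trans
      (congrArg (fun y => homotopyIter H' n (y, t)) (hφ x t))

theorem comp_hIterPath {φ : X → Y} {f g : C(X, X)} {f' g' : C(Y, Y)} {H : C(X × I, X)}
    {H' : C(Y × I, Y)} (hK₀ : ∀ x, H (x, 0) = f x) (hK₁ : ∀ x, H (x, 1) = g x)
    (hK₀' : ∀ y, H' (y, 0) = f' y) (hK₁' : ∀ y, H' (y, 1) = g' y)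
    (hφ : ∀ x t, φ (H (x, t)) = H' (φ x, t)) (n : ℕ) (x : X) :
    φ ∘ hIterPath H hK₀ hK₁ n x = hIterPath H' hK₀' hK₁' n (φ x) :=
  funext (apply_homotopyIter hφ n x)

theorem Path.Homotopic.exists_homotopy_mem {S : Set X} {a' b' : S} {γ' δ' : Path a' b'}
    (h : γ'.Homotopic δ') {a b : X} {γ δ : Path a b} (hγ : Subtype.val ∘ γ' = γ)
    (hδ : Subtype.val ∘ δ' = δ) : ∃ K : γ.Homotopy δ, ∀ z, K z ∈ S := by
  obtain ⟨K⟩ := h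
  have ha : a = a' := by simpa using (congrFun hγ 0).symm
  have hb : b = b' := by simpa using (congrFun hγ 1).symm
  exact ⟨((K.map ⟨Subtype.val, continuous_subtype_val⟩).pathCast ha hb).cast
    (Path.ext hγ) (Path.ext hδ), fun z => (K z).2⟩

end Restriction

theorem exists_homotopy_mem_of_mapsTo {X : Type} [TopologicalSpace X] {f g : C(X, X)}
    (H : C(X × I, X)) (hK₀ : ∀ x, H (x, 0) = f x) (hK₁ : ∀ x, H (x, 1) = g x) {S : Set X}
    (hS : ∀ t, Set.MapsTo (fun x => H (x, t)) S S) {x₀ : X} (hx₀ : x₀ ∈ S)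
    (ω : Path x₀ (f x₀)) (hω : ∀ t, ω t ∈ S) (n : ℕ) :
    ∃ K : (nPath g (ω.trans (hIterPath H hK₀ hK₁ 1 x₀)) n).Homotopy
        ((nPath f ω n).trans (hIterPath H hK₀ hK₁ n x₀)), ∀ z, K z ∈ S := by
  let HS : C(S × I, S) := ⟨fun z => ⟨H (z.1, z.2), hS z.2 z.1.2⟩,
    (H.continuous.comp (continuous_subtype_val.prodMap continuous_id)).subtype_mk _⟩
  let fS : C(S, S) := ⟨fun y => ⟨f y, hK₀ y ▸ hS 0 y.2⟩,
    (f.continuous.comp continuous_subtype_val).subtype_mk _⟩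
  let gS : C(S, S) := ⟨fun y => ⟨g y, hK₁ y ▸ hS 1 y.2⟩,
    (g.continuous.comp continuous_subtype_val).subtype_mk _⟩
  let x₀S : S := ⟨x₀, hx₀⟩
  let ωS : Path x₀S (fS x₀S) :=
    ⟨⟨fun t => ⟨ω t, hω t⟩, ω.continuous.subtype_mk _⟩, Subtype.ext ω.source, Subtype.ext ω.target⟩
  have hKS₀ : ∀ y, HS (y, 0) = fS y := fun y => Subtype.ext (hK₀ y)
  have hKS₁ : ∀ y, HS (y, 1) = gS y := fun y => Subtype.ext (hK₁ y)
  have hIter := comp_hIterPath (φ := Subtype.val) hKS₀ hKS₁ hK₀ hK₁ fun _ _ => rfl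
  refine (nPath_homotopic_nPath_trans_hIterPath HS hKS₀ hKS₁ ωS (.refl _) n).exists_homotopy_mem
    ?_ ?_
  · exact comp_nPath (φ := Subtype.val) (f := gS) (fun _ => rfl)
      (Path.comp_trans (φ := Subtype.val) (γ := ωS) rfl (hIter 1 x₀S)) n
  · exact Path.comp_trans (comp_nPath (φ := Subtype.val) (f := fS) (fun _ => rfl) rfl n)
      (hIter n x₀S)

theorem nPath_nu_homotopic_general {E B : Type} [TopologicalSpace E] [TopologicalSpace B]
    (p : C(E, B))
    (f g : C(E, E))
    (x₀ : E) (ω : Path x₀ (f x₀)) (hω : ∀ t, p (ω t) = p x₀)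
    (H : C(E × I, E)) (hK₀ : ∀ x, H (x, 0) = f x) (hK₁ : ∀ x, H (x, 1) = g x)
    (hKB : ∀ x t, p (H (x, t)) = p x)
    (ν : Path x₀ (g x₀))
    (hνdef : ν = ω.trans (hIterPath H hK₀ hK₁ 1 x₀))
    (n : ℕ) :
    ∃ K : Path.Homotopy (nPath g ν n)
        ((nPath f ω n).trans (hIterPath H hK₀ hK₁ n x₀)),
      ∀ z, p (K z) = p x₀ := by
  subst hνdef
  exact exists_homotopy_mem_of_mapsTo H hK₀ hK₁ (S := {x | p x = p x₀})
    (fun t x hx => (hKB x t).trans hx) rfl ω hω n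

theorem nPath_nu_homotopic {E B : Type} [TopologicalSpace E] [TopologicalSpace B]
    [CompactSpace E] [CompactSpace B] [PathConnectedSpace E] [PathConnectedSpace B]
    [T2Space E] [T2Space B] {dE dB : ℕ}
    [ChartedSpace (EuclideanSpace ℝ (Fin dE)) E]
    [ChartedSpace (EuclideanSpace ℝ (Fin dB)) B]
    (p : C(E, B)) (hp : IsHurewiczFibration p)
    (f g : C(E, E)) (hf : ∀ x, p (f x) = p x) (hg : ∀ x, p (g x) = p x)
    (x₀ : E) (ω : Path x₀ (f x₀)) (hω : ∀ t, p (ω t) = p x₀)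
    (H : C(E × I, E)) (hK₀ : ∀ x, H (x, 0) = f x) (hK₁ : ∀ x, H (x, 1) = g x)
    (hKB : ∀ x t, p (H (x, t)) = p x)
    (ν : Path x₀ (g x₀))
    (hνdef : ν = ω.trans (hIterPath H hK₀ hK₁ 1 x₀))
    (n : ℕ) (hn : 1 ≤ n) :
    ∃ K : Path.Homotopy (nPath g ν n)
        ((nPath f ω n).trans (hIterPath H hK₀ hK₁ n x₀)),
      ∀ z, p (K z) = p x₀ :=
  nPath_nu_homotopic_general p f g x₀ ω hω H hK₀ hK₁ hKB ν hνdef n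
end
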